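/- arXiv:0709.0785 — 2 statements merged into one kernel-verified Lean document; each statement's English description precedes it below -/
import Mathlib

section
/- Let Δₙ be the divided difference operator of type Dₙ associated to the simple root αₙ = t_{n−1} + tₙ, whose reflection sₙ sends t_{n−1} ↦ −tₙ, tₙ ↦ −t_{n−1} and fixes the other variables. Then for 1 ≤ k ≤ n−1, Δₙ(e_k(t₁,…,tₙ)) = 2·e_{k−1}(t₁,…,t_{n−2}). -/
/-
Split off the two variables `t_{n-1}, tₙ` moved by `sₙ`:
`e_{k+1}(S ∪ {a, b}) = e_{k+1}(S) + (t_a + t_b) e_k(S) + t_a t_b e_{k-1}(S)`.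
Since `sₙ` fixes `e_j(S)` and `t_a t_b` and negates `t_a + t_b`, the difference
`u - sₙ u` is `2 (t_a + t_b) e_k(S)`, and `t_a + t_b` can be cancelled.
-/

open MvPolynomial

/-- The elementary symmetric polynomial `e_k` in the variables indexed by a
finite set `S`. -/
noncomputable def esymmOn {n : ℕ} (S : Finset (Fin n)) (k : ℕ) :
    MvPolynomial (Fin n) ℤ :=
  ∑ A ∈ S.powersetCard k, ∏ i ∈ A, X i

theorem X_add_X_ne_zero {σ R : Type*} [CommSemiring R] [Nontrivial R] [DecidableEq σ]
    {a b : σ} (hab : a ≠ b) : (X a + X b : MvPolynomial σ R) ≠ 0 := by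
  intro h
  simpa [hab.symm] using congrArg (eval (Pi.single a 1)) h

section esymmOn

variable {n : ℕ}

lemma esymmOn_zero (S : Finset (Fin n)) : esymmOn S 0 = 1 := by
  simp [esymmOn]

lemma esymmOn_insert {T : Finset (Fin n)} {x : Fin n} (hx : x ∉ T) (k : ℕ) :
    esymmOn (insert x T) (k + 1) = esymmOn T (k + 1) + X x * esymmOn T k := by
  have hxA : ∀ A ∈ T.powersetCard k, x ∉ A := fun A hA h =>
    hx ((Finset.mem_powersetCard.mp hA).1 h)
  have hinj : Set.InjOn (insert x) (T.powersetCard k : Set (Finset (Fin n))) :=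
    fun A hA B hB h => by
      simpa [Finset.erase_insert (hxA A hA), Finset.erase_insert (hxA B hB)] using
        congrArg (·.erase x) h
  have hdisj : Disjoint (T.powersetCard (k + 1)) ((T.powersetCard k).image (insert x)) := by
    refine Finset.disjoint_left.mpr fun A hA hA' => ?_
    obtain ⟨B, -, rfl⟩ := Finset.mem_image.mp hA'
    exact hx ((Finset.mem_powersetCard.mp hA).1 (Finset.mem_insert_self x B))
  unfold esymmOn
  rw [Finset.powersetCard_succ_insert hx, Finset.sum_union hdisj, Finset.sum_image hinj,
    Finset.mul_sum]
  congr 1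
  exact Finset.sum_congr rfl fun A hA => Finset.prod_insert (hxA A hA)

lemma map_esymmOn_of_forall_map_X {f : MvPolynomial (Fin n) ℤ →+* MvPolynomial (Fin n) ℤ}
    {S : Finset (Fin n)} (hf : ∀ i ∈ S, f (X i) = X i) (k : ℕ) :
    f (esymmOn S k) = esymmOn S k := by
  simp only [esymmOn, map_sum, map_prod]
  exact Finset.sum_congr rfl fun A hA => Finset.prod_congr rfl fun i hi =>
    hf i ((Finset.mem_powersetCard.mp hA).1 hi)

lemma esymmOn_insert_insert_sub_map
    {f : MvPolynomial (Fin n) ℤ →+* MvPolynomial (Fin n) ℤ} {S : Finset (Fin n)} {a b : Fin n}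
    (ha : a ∉ insert b S) (hb : b ∉ S) (hfa : f (X a) = -X b) (hfb : f (X b) = -X a)
    (hfS : ∀ i ∈ S, f (X i) = X i) (k : ℕ) :
    esymmOn (insert a (insert b S)) (k + 1) - f (esymmOn (insert a (insert b S)) (k + 1)) =
      (X a + X b) * (2 * esymmOn S k) := by
  have hS := map_esymmOn_of_forall_map_X hfS
  cases k with
  | zero =>
    simp only [esymmOn_insert ha, esymmOn_insert hb, esymmOn_zero, map_add, map_mul, map_one,
      hfa, hfb, hS]
    ring
  | succ k =>
    simp only [esymmOn_insert ha, esymmOn_insert hb, map_add, map_mul, hfa, hfb, hS]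
    ring

end esymmOn

/-- Let `Δₙ` be the divided difference operator of type `Dₙ`
associated to the simple root `αₙ = t_{n-1} + tₙ`, whose reflection `s` sends
`t_{n-1} ↦ -tₙ`, `tₙ ↦ -t_{n-1}` and fixes the other variables.  Then for
`1 ≤ k ≤ n-1`, `Δₙ(e_k(t₁,…,tₙ)) = 2·e_{k-1}(t₁,…,t_{n-2})`.  We encode
`Δₙ(e_k) = d` as `(t_{n-1} + tₙ) · d = e_k - s(e_k)`. -/
theorem stmt4 (n : ℕ) (hn : 2 ≤ n)
    (s : MvPolynomial (Fin n) ℤ →+* MvPolynomial (Fin n) ℤ)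
    (hs : ∀ i : Fin n,
      s (X i) = if (i : ℕ) = n - 2 then -X (⟨n - 1, by omega⟩ : Fin n)
        else if (i : ℕ) = n - 1 then -X (⟨n - 2, by omega⟩ : Fin n) else X i)
    (k : ℕ) (hk1 : 1 ≤ k)
    (d : MvPolynomial (Fin n) ℤ)
    (hd : (X (⟨n - 2, by omega⟩ : Fin n) + X (⟨n - 1, by omega⟩ : Fin n)) * d =
      esymmOn Finset.univ k - s (esymmOn Finset.univ k)) :
    d = 2 * esymmOn (Finset.univ.filter (fun i : Fin n => (i : ℕ) < n - 2)) (k - 1) := by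
  set a : Fin n := ⟨n - 2, by omega⟩
  set b : Fin n := ⟨n - 1, by omega⟩
  set S := Finset.univ.filter (fun i : Fin n => (i : ℕ) < n - 2)
  have hab : a ≠ b := Fin.ne_of_val_ne (by simp only [a, b]; omega)
  have ha : a ∉ insert b S := by simp [S, a, b, Fin.ext_iff]; omega
  have hb : b ∉ S := by simp [S, b]; omega
  have huniv : Finset.univ = insert a (insert b S) := by
    ext i; simp [S, a, b, Fin.ext_iff]; omega
  have hsa : s (X a) = -X b := by simp [hs, a]
  have hsb : s (X b) = -X a := by simp [hs, b]; omega
  have hsS : ∀ i ∈ S, s (X i) = X i := fun i hi => by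
    simp only [S, Finset.mem_filter] at hi
    rw [hs, if_neg (by omega), if_neg (by omega)]
  obtain ⟨k, rfl⟩ : ∃ m, k = m + 1 := ⟨k - 1, by omega⟩
  rw [huniv, esymmOn_insert_insert_sub_map ha hb hsa hsb hsS] at hd
  simpa using mul_left_cancel₀ (X_add_X_ne_zero hab) hd
end

section
/- Let A = ℤ[t₁,t₂,t₃,γ₃]/(c₁, c₂, c₃ − 2γ₃, γ₃²) where cᵢ = eᵢ(t₁,t₂,t₃). Then the quotient of A by the ideal generated by (the classes of) t₁, t₂, t₃ is isomorphic as a ring to ℤ[X]/(2X, X²). -/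
open MvPolynomial

/-- `cᵢ = eᵢ(t₁,t₂,t₃)`, the elementary symmetric polynomials in the first
three variables of `ℤ[t₁,t₂,t₃,γ₃]` (variables `X 0, X 1, X 2`; `γ₃ = X 3`). -/
noncomputable def c8 (k : ℕ) : MvPolynomial (Fin 4) ℤ :=
  ∑ A ∈ ({0, 1, 2} : Finset (Fin 4)).powersetCard k, ∏ i ∈ A, X i

/-- The ideal `(c₁, c₂, c₃ - 2γ₃, γ₃²)`. -/
noncomputable def I8 : Ideal (MvPolynomial (Fin 4) ℤ) :=
  Ideal.span {c8 1, c8 2, c8 3 - 2 * X 3, (X 3) ^ 2}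

/-- `A = ℤ[t₁,t₂,t₃,γ₃]/(c₁, c₂, c₃ - 2γ₃, γ₃²)`, the integral cohomology
ring of `G₂/T`. -/
noncomputable def A8 : Type := MvPolynomial (Fin 4) ℤ ⧸ I8

noncomputable instance : CommRing A8 := Ideal.Quotient.commRing I8

/-- The ideal of `A` generated by the classes of `t₁, t₂, t₃`. -/
noncomputable def J8 : Ideal A8 :=
  Ideal.span {Ideal.Quotient.mk I8 (X 0), Ideal.Quotient.mk I8 (X 1),
    Ideal.Quotient.mk I8 (X 2)}

/-! Modulo `t₁, t₂, t₃` every `cₖ` with `k ≥ 1` vanishes, so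
`(c₁, c₂, c₃ - 2γ₃, γ₃²) + (t₁, t₂, t₃) = (2γ₃, γ₃²) + (t₁, t₂, t₃)`,
and killing the `tᵢ` leaves `ℤ[γ₃]/(2γ₃, γ₃²)`. By the third isomorphism theorem,
`A/J` is the quotient of `ℤ[t₁,t₂,t₃,γ₃]` by this sum of ideals. -/

theorem MvPolynomial.sum_powersetCard_prod_X_mem_span {σ R : Type*} [CommSemiring R]
    (s : Finset σ) {k : ℕ} (hk : k ≠ 0) :
    ∑ A ∈ s.powersetCard k, ∏ i ∈ A, (X i : MvPolynomial σ R) ∈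
      Ideal.span (X '' (s : Set σ)) := by
  refine Ideal.sum_mem _ fun A hA => ?_
  obtain ⟨hAs, hcard⟩ := Finset.mem_powersetCard.1 hA
  obtain ⟨i, hi⟩ : A.Nonempty := Finset.card_pos.1 (by omega)
  exact Ideal.prod_mem _ hi (Ideal.subset_span ⟨i, hAs hi, rfl⟩)

def Ideal.quotientEquivOfCompEq {R S : Type*} [CommRing R] [CommRing S] {I : Ideal R}
    {J : Ideal S} (f : R →+* S) (g : S →+* R) (hf : I ≤ J.comap f) (hg : J ≤ I.comap g)
    (hgf : (Ideal.Quotient.mk I).comp (g.comp f) = Ideal.Quotient.mk I)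
    (hfg : (Ideal.Quotient.mk J).comp (f.comp g) = Ideal.Quotient.mk J) : R ⧸ I ≃+* S ⧸ J :=
  RingEquiv.ofRingHom (Ideal.quotientMap J f hf) (Ideal.quotientMap I g hg)
    (Ideal.Quotient.ringHom_ext <| RingHom.ext fun y => by simpa using DFunLike.congr_fun hfg y)
    (Ideal.Quotient.ringHom_ext <| RingHom.ext fun x => by simpa using DFunLike.congr_fun hgf x)

noncomputable def tIdeal : Ideal (MvPolynomial (Fin 4) ℤ) :=
  Ideal.span (X '' ↑({0, 1, 2} : Finset (Fin 4)))

theorem X_mem_tIdeal {i : Fin 4} (hi : i ≠ 3) : X i ∈ tIdeal :=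
  Ideal.subset_span ⟨i, by fin_cases i <;> simp_all, rfl⟩

theorem c8_mem_tIdeal {k : ℕ} (hk : k ≠ 0) : c8 k ∈ tIdeal :=
  sum_powersetCard_prod_X_mem_span _ hk

theorem J8_eq_map : J8 = tIdeal.map (Ideal.Quotient.mk I8) := by
  simp [J8, tIdeal, Ideal.map_span, Set.image_insert_eq]
  rfl

theorem two_mul_X_three_mem : 2 * X 3 ∈ I8 ⊔ tIdeal := by
  have h : c8 3 - 2 * X 3 ∈ I8 := Ideal.subset_span (by simp)
  simpa using sub_mem (Ideal.mem_sup_right (c8_mem_tIdeal three_ne_zero)) (Ideal.mem_sup_left h)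

noncomputable def killT : MvPolynomial (Fin 4) ℤ →+* Polynomial ℤ :=
  eval₂Hom Polynomial.C ![0, 0, 0, Polynomial.X]

noncomputable def toGamma : Polynomial ℤ →+* MvPolynomial (Fin 4) ℤ :=
  Polynomial.eval₂RingHom C (X 3)

theorem tIdeal_le_ker_killT : tIdeal ≤ RingHom.ker killT := by
  rw [tIdeal, Ideal.span_le]
  rintro _ ⟨i, hi, rfl⟩
  fin_cases i <;> simp_all [killT]

theorem killT_comp_toGamma : killT.comp toGamma = RingHom.id _ := by
  ext <;> simp [killT, toGamma]

theorem sup_tIdeal_le_comap_killT :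
    I8 ⊔ tIdeal ≤ (Ideal.span {2 * Polynomial.X, Polynomial.X ^ 2}).comap killT := by
  refine sup_le ?_ (tIdeal_le_ker_killT.trans (Ideal.comap_mono bot_le))
  have hc {k : ℕ} (hk : k ≠ 0) : killT (c8 k) = 0 := tIdeal_le_ker_killT (c8_mem_tIdeal hk)
  rw [I8, Ideal.span_le]
  rintro _ (rfl | rfl | rfl | rfl) <;> simp only [SetLike.mem_coe, Ideal.mem_comap]
  · simp [hc one_ne_zero]
  · simp [hc two_ne_zero]
  · have h : 2 * Polynomial.X ∈
        Ideal.span {2 * Polynomial.X, (Polynomial.X : Polynomial ℤ) ^ 2} :=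
      Ideal.subset_span (by simp)
    rw [map_sub, hc three_ne_zero, zero_sub]
    simpa [killT] using neg_mem h
  · have h : Polynomial.X ^ 2 ∈
        Ideal.span {2 * Polynomial.X, (Polynomial.X : Polynomial ℤ) ^ 2} :=
      Ideal.subset_span (by simp)
    simpa [killT] using h

theorem span_le_comap_toGamma :
    Ideal.span {2 * Polynomial.X, Polynomial.X ^ 2} ≤ (I8 ⊔ tIdeal).comap toGamma := by
  rw [Ideal.span_le]
  rintro _ (rfl | rfl) <;> simp only [SetLike.mem_coe, Ideal.mem_comap]
  · simpa [toGamma] using two_mul_X_three_mem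
  · have h : X 3 ^ 2 ∈ I8 := Ideal.subset_span (by simp)
    simpa [toGamma] using Ideal.mem_sup_left h

theorem mk_comp_toGamma_comp_killT :
    (Ideal.Quotient.mk (I8 ⊔ tIdeal)).comp (toGamma.comp killT) = Ideal.Quotient.mk _ := by
  ext i
  · simp [toGamma, killT]
  · rw [RingHom.comp_apply, RingHom.comp_apply]
    by_cases hi : i = 3
    · subst hi
      simp [killT, toGamma]
    · rw [tIdeal_le_ker_killT (X_mem_tIdeal hi), map_zero, map_zero, eq_comm,
        Ideal.Quotient.eq_zero_iff_mem]
      exact Ideal.mem_sup_right (X_mem_tIdeal hi)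

noncomputable def quotientSupEquiv : MvPolynomial (Fin 4) ℤ ⧸ (I8 ⊔ tIdeal) ≃+*
    Polynomial ℤ ⧸ Ideal.span ({2 * Polynomial.X, Polynomial.X ^ 2} : Set (Polynomial ℤ)) :=
  Ideal.quotientEquivOfCompEq killT toGamma sup_tIdeal_le_comap_killT span_le_comap_toGamma
    mk_comp_toGamma_comp_killT (by rw [killT_comp_toGamma, RingHom.comp_id])

/-- The quotient of `A = ℤ[t₁,t₂,t₃,γ₃]/(c₁, c₂, c₃-2γ₃, γ₃²)`
by the ideal generated by the classes of `t₁, t₂, t₃` is isomorphic as a ring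
to `ℤ[X]/(2X, X²)` (the Chow ring of the algebraic group `G₂`). -/
theorem stmt8 :
    Nonempty ((A8 ⧸ J8) ≃+*
      (Polynomial ℤ ⧸ Ideal.span ({2 * Polynomial.X, Polynomial.X ^ 2} : Set (Polynomial ℤ)))) := by
  rw [J8_eq_map]
  exact ⟨(DoubleQuot.quotQuotEquivQuotSup I8 tIdeal).trans quotientSupEquiv⟩
end
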